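/- arXiv:1911.02776 — 3 statements merged into one kernel-verified Lean document; each statement's English description precedes it below -/
import Mathlib

section
/- The function z(x,t) = (4/π)[sin(x)cos(t) + sin(3x)cos(3t)/3] (the N = 1 partial sum) satisfies z(x,t) ≥ 0 for all x ∈ [0, 0.78] and t ∈ [0, 0.78]. -/
open Real

/-!
By the triple-angle formulas the sum factors as
`sin x cos t · (3 + (3 - 4 sin² x)(4 cos² t - 3)) / 3`, and the bracket equals
`12 (1 - sin² x)(cos² t - 1/2) + 2 sin² x (3 - 2 cos² t)`, which is nonnegative as soon as
`cos² t ≥ 1/2`. On `[0, 0.78]²` we have `0.78 < π/4`, so `sin x ≥ 0`, `cos t ≥ 0` and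
`cos² t = (1 + cos 2t)/2 ≥ 1/2`.
-/

namespace Real

theorem sin_mul_cos_add_sin_three_mul_mul_cos_three_mul_div_three (x t : ℝ) :
    sin x * cos t + sin (3 * x) * cos (3 * t) / 3 =
      sin x * cos t * (3 + (3 - 4 * sin x ^ 2) * (4 * cos t ^ 2 - 3)) / 3 := by
  rw [sin_three_mul, cos_three_mul]
  ring

theorem three_add_mul_sin_sq_cos_sq_nonneg (x : ℝ) {t : ℝ} (ht : 1 / 2 ≤ cos t ^ 2) :
    0 ≤ 3 + (3 - 4 * sin x ^ 2) * (4 * cos t ^ 2 - 3) := by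
  have hs : 0 ≤ 1 - sin x ^ 2 := by nlinarith [sin_sq_add_cos_sq x]
  have hc : 0 ≤ 3 - 2 * cos t ^ 2 := by nlinarith [cos_sq_le_one t]
  nlinarith [mul_nonneg hs (sub_nonneg.2 ht), mul_nonneg (sq_nonneg (sin x)) hc]

theorem sin_mul_cos_add_sin_three_mul_mul_cos_three_mul_nonneg {x t : ℝ}
    (hx : x ∈ Set.Icc 0 π) (ht : t ∈ Set.Icc (-(π / 4)) (π / 4)) :
    0 ≤ sin x * cos t + sin (3 * x) * cos (3 * t) / 3 := by
  obtain ⟨ht₀, ht₁⟩ := ht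
  have hsin : 0 ≤ sin x := sin_nonneg_of_nonneg_of_le_pi hx.1 hx.2
  have hcos : 0 ≤ cos t := cos_nonneg_of_neg_pi_div_two_le_of_le (by linarith) (by linarith)
  have hcos_two_mul : 0 ≤ cos (2 * t) :=
    cos_nonneg_of_neg_pi_div_two_le_of_le (by linarith) (by linarith)
  have hcos_sq : 1 / 2 ≤ cos t ^ 2 := by rw [cos_sq t]; linarith
  rw [sin_mul_cos_add_sin_three_mul_mul_cos_three_mul_div_three]
  have hbracket := three_add_mul_sin_sq_cos_sq_nonneg x hcos_sq
  positivity

end Real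

/-- The `N = 1` partial sum `z(x,t) = (4/π)[sin x cos t + sin(3x)cos(3t)/3]` is
nonnegative on `[0, 0.78] × [0, 0.78]`. -/
theorem z1_nonneg :
    ∀ x ∈ Set.Icc (0:ℝ) 0.78, ∀ t ∈ Set.Icc (0:ℝ) 0.78,
      0 ≤ (4 / π) * (Real.sin x * Real.cos t
        + Real.sin (3 * x) * Real.cos (3 * t) / 3) := by
  intro x ⟨hx₀, hx₁⟩ t ⟨ht₀, ht₁⟩
  have hπ : (0.78 : ℝ) ≤ π / 4 := by linarith [pi_gt_d2]
  have hz := sin_mul_cos_add_sin_three_mul_mul_cos_three_mul_nonneg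
    (x := x) (t := t) ⟨hx₀, by linarith⟩ ⟨by linarith, by linarith⟩
  positivity
end

section
/- There exist real numbers x, t with 0 ≤ x ≤ 0.4 and 0 ≤ t ≤ 0.4 such that (4/π)[sin(x)cos(t) + sin(3x)cos(3t)/3 + sin(5x)cos(5t)/5 + sin(7x)cos(7t)/7] < 0; hence the N = 3 partial sum fails to be nonnegative on [0, 0.4] × [0, 0.4]. -/
/-!
With `F u = ∑_{k ∈ {1,3,5,7}} sin (k u) / k` we have `z(x,t) = (4/π) (F (t + x) - F (t - x)) / 2`,
and `F' u = ∑ cos (k u) = sin (8 u) / (2 sin u)` is negative just past `u = π/8 < 0.4`.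
So `z(x, 2/5) < 0` for small `x > 0`. At `x = 1/20` the bracketed sum is only about `-0.0027`,
which fourth-order Taylor bounds (with the double-angle formula for `cos 2` and `cos (14/5)`)
still certify.
-/

open Real

namespace Real

lemma cos_le_one_sub_sq_div_two_add_pow_four_div_24 (x : ℝ) :
    cos x ≤ 1 - x ^ 2 / 2 + x ^ 4 / 24 := by
  wlog hx : 0 ≤ x generalizing x
  · simpa [Even.neg_pow (by decide : Even 4)] using this (-x) (by linarith)
  rcases le_or_gt x 4 with hx4 | hx4
  · have hs : x / 2 - (x / 2) ^ 3 / 6 ≤ sin (x / 2) := sin_ge_sub_cube (by linarith)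
    have hx16 : 0 ≤ 16 - x ^ 2 := by nlinarith
    have hs₀ : 0 ≤ x / 2 - (x / 2) ^ 3 / 6 := by nlinarith [mul_nonneg hx hx16]
    have hsq := pow_le_pow_left₀ hs₀ hs 2
    have hcos : cos x = 1 - 2 * sin (x / 2) ^ 2 := by
      rw [← cos_two_mul_eq_one_sub, mul_div_cancel₀ x two_ne_zero]
    nlinarith [pow_two_nonneg (x ^ 3)]
  · -- here the right-hand side is at least `1`
    have h12 : 0 ≤ x ^ 2 - 12 := by nlinarith
    nlinarith [cos_le_one x, mul_nonneg (sq_nonneg x) h12]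

lemma cos_nonneg_of_sq_le_two {x : ℝ} (hx : x ^ 2 ≤ 2) : 0 ≤ cos x := by
  linarith [one_sub_sq_div_two_le_cos (x := x)]

lemma cos_two_mul_le_of_sq_le_two {x : ℝ} (hx : x ^ 2 ≤ 2) :
    cos (2 * x) ≤ 2 * (1 - x ^ 2 / 2 + x ^ 4 / 24) ^ 2 - 1 := by
  rw [cos_two_mul]
  gcongr
  · exact cos_nonneg_of_sq_le_two hx
  · exact cos_le_one_sub_sq_div_two_add_pow_four_div_24 x

lemma sin_mul_cos_le_of_cos_nonneg {x y : ℝ} (hx : 0 ≤ x) (hy : 0 ≤ cos y) :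
    sin x * cos y ≤ x * (1 - y ^ 2 / 2 + y ^ 4 / 24) :=
  mul_le_mul (sin_le hx) (cos_le_one_sub_sq_div_two_add_pow_four_div_24 y) hy hx

lemma sin_mul_cos_le_of_cos_le_nonpos {x y u : ℝ} (hx : 0 ≤ x) (hx' : 0 ≤ x - x ^ 3 / 6)
    (hy : cos y ≤ u) (hu : u ≤ 0) : sin x * cos y ≤ (x - x ^ 3 / 6) * u := by
  have hs := sin_ge_sub_cube hx
  calc sin x * cos y ≤ sin x * u := mul_le_mul_of_nonneg_left hy (hx'.trans hs)
    _ ≤ (x - x ^ 3 / 6) * u := mul_le_mul_of_nonpos_right hs hu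

end Real

/-- The `N = 3` partial sum takes a negative value somewhere on `[0, 0.4] × [0, 0.4]`,
so it fails to be nonnegative on that square. -/
theorem z3_neg_somewhere :
    ∃ x t : ℝ, 0 ≤ x ∧ x ≤ 0.4 ∧ 0 ≤ t ∧ t ≤ 0.4 ∧
      (4 / π) * (Real.sin x * Real.cos t
        + Real.sin (3 * x) * Real.cos (3 * t) / 3
        + Real.sin (5 * x) * Real.cos (5 * t) / 5
        + Real.sin (7 * x) * Real.cos (7 * t) / 7) < 0 := by
  refine ⟨1 / 20, 2 / 5, by norm_num, by norm_num, by norm_num, by norm_num, ?_⟩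
  have hcos2 : cos (5 * (2 / 5)) ≤ 2 * (1 - 1 ^ 2 / 2 + 1 ^ 4 / 24) ^ 2 - 1 := by
    rw [show (5 : ℝ) * (2 / 5) = 2 * 1 by norm_num]
    exact cos_two_mul_le_of_sq_le_two (by norm_num)
  have hcos14 : cos (7 * (2 / 5)) ≤
      2 * (1 - (7 / 5) ^ 2 / 2 + (7 / 5) ^ 4 / 24) ^ 2 - 1 := by
    rw [show (7 : ℝ) * (2 / 5) = 2 * (7 / 5) by norm_num]
    exact cos_two_mul_le_of_sq_le_two (by norm_num)
  have h1 := sin_mul_cos_le_of_cos_nonneg (x := 1 / 20) (y := 2 / 5) (by norm_num)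
    (cos_nonneg_of_sq_le_two (by norm_num))
  have h3 := sin_mul_cos_le_of_cos_nonneg (x := 3 * (1 / 20)) (y := 3 * (2 / 5)) (by norm_num)
    (cos_nonneg_of_sq_le_two (by norm_num))
  have h5 := sin_mul_cos_le_of_cos_le_nonpos (x := 5 * (1 / 20)) (by norm_num) (by norm_num)
    hcos2 (by norm_num)
  have h7 := sin_mul_cos_le_of_cos_le_nonpos (x := 7 * (1 / 20)) (by norm_num) (by norm_num)
    hcos14 (by norm_num)
  refine mul_neg_of_pos_of_neg (by positivity) ?_
  norm_num at h1 h3 h5 h7 ⊢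
  linarith
end

section
/- Define u₁(x,t,α) = U_{01}(α)·(4/π)sin(x)cos(t) and u₂(x,t,α) = U_{02}(α)·(4/π)sin(x)cos(t), where U_{01}, U_{02} : [0,1] → ℝ are the level functions of a fuzzy number Ũ₀ (U_{01} nondecreasing, U_{02} nonincreasing, U_{01} ≤ U_{02}). Then for i = 1, 2 and every α ∈ [0,1]: (a) ∂²uᵢ/∂t²(x,t,α) = ∂²uᵢ/∂x²(x,t,α) for all (x,t); (b) uᵢ(0,t,α) = uᵢ(π,t,α) = 0; (c) ∂uᵢ/∂t(x,0,α) = 0; and (d) for every (x,t) ∈ [0,π] × [0,π/2], u₁(x,t,α) ≤ u₂(x,t,α), α ↦ u₁(x,t,α) is nondecreasing and α ↦ u₂(x,t,α) is nonincreasing, so [u₁(x,t,α), u₂(x,t,α)] defines the level sets of a fuzzy number; hence ũ(x,t) = Ũ₀ ⊙ (4/π)sin(x)cos(t) is a Seikkala solution of the fuzzy wave equation on [0,π] × [0,π/2]. -/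
/-!
The profile `(4/π) sin x cos t` is a standing wave of the unit-speed wave equation that vanishes
at `x = 0, π` and has zero initial velocity, and it is nonnegative on `[0,π] × [0,π/2]`.
Multiplying it by the level functions of `Ũ₀` keeps the crisp problem solved (the equation and
conditions are linear), and a nonnegative factor preserves `U₀₁ ≤ U₀₂` and both monotonicities.
-/

open Real

theorem deriv_const_mul_cos (a : ℝ) : deriv (fun s => a * cos s) = fun s => -(a * sin s) := by
  funext s
  rw [((hasDerivAt_cos s).const_mul a).deriv]
  ring

theorem deriv_deriv_const_mul_cos (a t : ℝ) :
    deriv (deriv fun s => a * cos s) t = -(a * cos t) := by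
  rw [deriv_const_mul_cos]
  exact ((hasDerivAt_sin t).const_mul a).neg.deriv

theorem deriv_deriv_const_mul_sin (a x : ℝ) :
    deriv (deriv fun y => a * sin y) x = -(a * sin x) := by
  have h : deriv (fun y => a * sin y) = fun y => a * cos y :=
    funext fun y => ((hasDerivAt_sin y).const_mul a).deriv
  rw [h, deriv_const_mul_cos]

-- Both sides equal `-a sin x cos t`.
theorem deriv_deriv_mul_sin_mul_cos (a x t : ℝ) :
    deriv (deriv fun s => a * sin x * cos s) t = deriv (deriv fun y => a * sin y * cos t) x := by
  have h : (fun y => a * sin y * cos t) = fun y => a * cos t * sin y := by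
    funext y
    ring
  rw [h, deriv_deriv_const_mul_cos, deriv_deriv_const_mul_sin]
  ring

theorem four_div_pi_mul_sin_mul_cos_nonneg {x t : ℝ} (hx : x ∈ Set.Icc 0 π)
    (ht : t ∈ Set.Icc 0 (π / 2)) : 0 ≤ (4 / π) * sin x * cos t := by
  have hsin : 0 ≤ sin x := sin_nonneg_of_mem_Icc hx
  have hcos : 0 ≤ cos t := cos_nonneg_of_mem_Icc ⟨by linarith [ht.1, pi_pos], ht.2⟩
  have hpi : 0 ≤ 4 / π := by positivity
  positivity

/-- `ũ(x,t) = Ũ₀ ⊙ (4/π) sin x cos t` is a Seikkala solution of the fuzzy wave equation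
on `[0,π] × [0,π/2]`: each level function `uᵢ(x,t,α) = U₀ᵢ(α)(4/π) sin x cos t`
(a) solves the crisp wave equation, (b) vanishes at `x = 0` and `x = π`, (c) has zero
initial velocity, and (d) on `[0,π] × [0,π/2]` the pair `[u₁, u₂]` satisfies the
Goetschel–Voxman conditions, defining fuzzy-number level sets. -/
theorem seikkala_solution_n0
    (U₀₁ U₀₂ : ℝ → ℝ)
    (hU₁ : MonotoneOn U₀₁ (Set.Icc (0:ℝ) 1))
    (hU₂ : AntitoneOn U₀₂ (Set.Icc (0:ℝ) 1))
    (hle : ∀ α ∈ Set.Icc (0:ℝ) 1, U₀₁ α ≤ U₀₂ α)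
    (u₁ u₂ : ℝ → ℝ → ℝ → ℝ)
    (hu₁ : ∀ x t α : ℝ, u₁ x t α = U₀₁ α * ((4 / π) * Real.sin x * Real.cos t))
    (hu₂ : ∀ x t α : ℝ, u₂ x t α = U₀₂ α * ((4 / π) * Real.sin x * Real.cos t)) :
    (∀ α ∈ Set.Icc (0:ℝ) 1, ∀ x t : ℝ,
      deriv (deriv (fun s => u₁ x s α)) t = deriv (deriv (fun y => u₁ y t α)) x ∧
      deriv (deriv (fun s => u₂ x s α)) t = deriv (deriv (fun y => u₂ y t α)) x) ∧
    (∀ α ∈ Set.Icc (0:ℝ) 1, ∀ t : ℝ,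
      u₁ 0 t α = 0 ∧ u₁ π t α = 0 ∧ u₂ 0 t α = 0 ∧ u₂ π t α = 0) ∧
    (∀ α ∈ Set.Icc (0:ℝ) 1, ∀ x : ℝ,
      deriv (fun s => u₁ x s α) 0 = 0 ∧ deriv (fun s => u₂ x s α) 0 = 0) ∧
    (∀ x ∈ Set.Icc (0:ℝ) π, ∀ t ∈ Set.Icc (0:ℝ) (π / 2),
      (∀ α ∈ Set.Icc (0:ℝ) 1, u₁ x t α ≤ u₂ x t α) ∧
      MonotoneOn (fun α => u₁ x t α) (Set.Icc (0:ℝ) 1) ∧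
      AntitoneOn (fun α => u₂ x t α) (Set.Icc (0:ℝ) 1)) := by
  refine ⟨fun α _ x t => ⟨?_, ?_⟩, fun α _ t => by simp [hu₁, hu₂],
    fun α _ x => ⟨?_, ?_⟩, fun x hx t ht => ?_⟩
  · simpa only [hu₁, ← mul_assoc] using deriv_deriv_mul_sin_mul_cos _ x t
  · simpa only [hu₂, ← mul_assoc] using deriv_deriv_mul_sin_mul_cos _ x t
  · simp only [hu₁, ← mul_assoc, deriv_const_mul_cos, sin_zero, mul_zero, neg_zero]
  · simp only [hu₂, ← mul_assoc, deriv_const_mul_cos, sin_zero, mul_zero, neg_zero]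
  have hk := four_div_pi_mul_sin_mul_cos_nonneg hx ht
  simp only [hu₁, hu₂]
  exact ⟨fun α hα => mul_le_mul_of_nonneg_right (hle α hα) hk,
    (monotone_mul_right_of_nonneg hk).comp_monotoneOn hU₁,
    (monotone_mul_right_of_nonneg hk).comp_antitoneOn hU₂⟩
end
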